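/- Let L be a positive compact self-adjoint operator on a separable Hilbert space with eigenvalues μ_i ≤ C i^{−c} for some c > 1 and C > 0. Then there exists c_b > 0 such that for all λ ∈ (0,1], the effective dimension satisfies N(λ) = Σ_i μ_i/(μ_i + λ) ≤ c_b λ^{−1/c}. -/

import Mathlib

/-!
Each term `μ i / (μ i + λ)` is at most `1` and at most `C (i + 1)^(-c) / λ`. Splitting the sum at
`n = ⌈λ^(-1/c)⌉`, the first `n` terms contribute at most `n ≤ 2 λ^(-1/c)`, and the tail is bounded
by telescoping `(c - 1) (x + 1)^(-c) ≤ x^(1-c) - (x + 1)^(1-c)` (mean value theorem), giving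
`C n^(1-c) / ((c - 1) λ) ≤ C λ^(-1/c) / (c - 1)`.
-/

open Finset

theorem sub_one_mul_rpow_neg_le_rpow_one_sub_sub {c x : ℝ} (hc : 1 ≤ c) (hx : 0 < x) :
    (c - 1) * (x + 1) ^ (-c) ≤ x ^ (1 - c) - (x + 1) ^ (1 - c) := by
  obtain ⟨ξ, ⟨hxξ, hξx⟩, hslope⟩ := exists_hasDerivAt_eq_slope (fun t : ℝ ↦ t ^ (1 - c))
    (fun t ↦ (1 - c) * t ^ (-c)) (lt_add_one x)
    (fun t ht ↦ (Real.continuousAt_rpow_const t _ (.inl (hx.trans_le ht.1).ne')).continuousWithinAt)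
    (fun t ht ↦ by
      simpa using Real.hasDerivAt_rpow_const (p := 1 - c) (.inl (hx.trans ht.1).ne'))
  have hdiff : x ^ (1 - c) - (x + 1) ^ (1 - c) = (c - 1) * ξ ^ (-c) := by
    simp only [add_sub_cancel_left, div_one] at hslope
    linarith
  rw [hdiff]
  exact mul_le_mul_of_nonneg_left
    (Real.rpow_le_rpow_of_nonpos (hx.trans hxξ) hξx.le (by linarith)) (by linarith)

theorem sub_one_mul_sum_range_rpow_neg_le {c a : ℝ} (hc : 1 ≤ c) (ha : 0 < a) (m : ℕ) :
    (c - 1) * ∑ k ∈ range m, (a + k + 1) ^ (-c) ≤ a ^ (1 - c) := by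
  set g : ℕ → ℝ := fun k ↦ (a + k) ^ (1 - c)
  calc (c - 1) * ∑ k ∈ range m, (a + k + 1) ^ (-c)
      ≤ ∑ k ∈ range m, (g k - g (k + 1)) := by
        rw [mul_sum]
        refine sum_le_sum fun k _ ↦ ?_
        simpa [g, add_assoc] using
          sub_one_mul_rpow_neg_le_rpow_one_sub_sub hc (by positivity : 0 < a + k)
    _ = g 0 - g m := sum_range_sub' g m
    _ ≤ a ^ (1 - c) := by
        have : 0 ≤ g m := by positivity
        simp only [g, CharP.cast_eq_zero, add_zero]
        linarith

theorem tsum_le_of_le_one_of_le_mul_rpow_neg {f : ℕ → ℝ} {B c : ℝ} (hc : 1 < c) (hB : 0 ≤ B)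
    (hf₀ : ∀ i, 0 ≤ f i) (hf₁ : ∀ i, f i ≤ 1) (hfB : ∀ i, f i ≤ B * ((i : ℝ) + 1) ^ (-c))
    {n : ℕ} (hn : 0 < n) :
    ∑' i, f i ≤ n + B * ((n : ℝ) ^ (1 - c) / (c - 1)) := by
  refine Real.tsum_le_of_sum_range_le hf₀ fun m ↦ ?_
  have hhead : ∑ i ∈ range n, f i ≤ n := by
    simpa using sum_le_sum fun i (_ : i ∈ range n) ↦ hf₁ i
  have htail : ∑ k ∈ range m, f (n + k) ≤ B * ((n : ℝ) ^ (1 - c) / (c - 1)) := by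
    calc ∑ k ∈ range m, f (n + k)
        ≤ B * ∑ k ∈ range m, ((n : ℝ) + k + 1) ^ (-c) := by
          rw [mul_sum]
          exact sum_le_sum fun k _ ↦ by simpa using hfB (n + k)
      _ ≤ B * ((n : ℝ) ^ (1 - c) / (c - 1)) := by
          gcongr
          rw [le_div_iff₀ (by linarith), mul_comm]
          exact sub_one_mul_sum_range_rpow_neg_le hc.le (by positivity) m
  calc ∑ i ∈ range m, f i
      ≤ ∑ i ∈ range (n + m), f i :=
        sum_le_sum_of_subset_of_nonneg (range_subset_range.2 (by omega)) fun i _ _ ↦ hf₀ i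
    _ = ∑ i ∈ range n, f i + ∑ k ∈ range m, f (n + k) := sum_range_add f n m
    _ ≤ n + B * ((n : ℝ) ^ (1 - c) / (c - 1)) := add_le_add hhead htail

theorem rpow_neg_inv_rpow_one_sub {lam c : ℝ} (hlam : 0 < lam) (hc : c ≠ 0) :
    (lam ^ (-(1 / c))) ^ (1 - c) = lam * lam ^ (-(1 / c)) := by
  have hexp : -(1 / c) * (1 - c) = 1 + -(1 / c) := by field_simp; ring
  rw [← Real.rpow_mul hlam.le, hexp, Real.rpow_add hlam, Real.rpow_one]

/-- If the eigenvalues of a positive compact self-adjoint operator decay polynomially,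
`μ_i ≤ C i^{-c}` with `c > 1`, then there is `c_b > 0` with
`N(λ) = ∑ μ_i/(μ_i+λ) ≤ c_b λ^{-1/c}` for all `λ ∈ (0,1]`. -/
theorem effective_dimension_polynomial_decay
    (μ : ℕ → ℝ) (hpos : ∀ i, 0 ≤ μ i) (C c : ℝ) (hC : 0 < C) (hc : 1 < c)
    (hdecay : ∀ i : ℕ, μ i ≤ C * ((i : ℝ) + 1) ^ (-c)) :
    ∃ cb > 0, ∀ lam ∈ Set.Ioc (0 : ℝ) 1,
      ∑' i, μ i / (μ i + lam) ≤ cb * lam ^ (-(1 / c)) := by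
  have hc₁ : 0 < c - 1 := by linarith
  refine ⟨2 + C / (c - 1), by positivity, fun lam ⟨hlam₀, hlam₁⟩ ↦ ?_⟩
  set x := lam ^ (-(1 / c))
  have hx : 1 ≤ x := Real.one_le_rpow_of_pos_of_le_one_of_nonpos hlam₀ hlam₁
    (neg_nonpos.2 (by positivity))
  set n := ⌈x⌉₊
  have hn : 0 < n := Nat.ceil_pos.2 (by linarith)
  have hnx : (n : ℝ) ≤ 2 * x := by linarith [Nat.ceil_lt_add_one (by linarith : 0 ≤ x)]
  have hpow : (n : ℝ) ^ (1 - c) ≤ lam * x := by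
    rw [← rpow_neg_inv_rpow_one_sub hlam₀ (by linarith)]
    exact Real.rpow_le_rpow_of_nonpos (by linarith) (Nat.le_ceil x) (by linarith)
  have hden : ∀ i, 0 < μ i + lam := fun i ↦ by linarith [hpos i]
  have hbound := tsum_le_of_le_one_of_le_mul_rpow_neg (f := fun i ↦ μ i / (μ i + lam))
    (B := C / lam) hc (by positivity) (fun i ↦ div_nonneg (hpos i) (hden i).le)
    (fun i ↦ (div_le_one (hden i)).2 (by linarith))
    (fun i ↦ calc μ i / (μ i + lam) ≤ μ i / lam := by gcongr <;> linarith [hpos i]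
      _ ≤ C * ((i : ℝ) + 1) ^ (-c) / lam := by gcongr; exact hdecay i
      _ = C / lam * ((i : ℝ) + 1) ^ (-c) := by ring) hn
  calc ∑' i, μ i / (μ i + lam)
      ≤ n + C / lam * ((n : ℝ) ^ (1 - c) / (c - 1)) := hbound
    _ ≤ 2 * x + C / lam * (lam * x / (c - 1)) := by gcongr
    _ = (2 + C / (c - 1)) * x := by field_simp
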